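/- arXiv:2306.06015 — 2 statements merged into one kernel-verified Lean document; each statement's English description precedes it below -/
import Mathlib

section
/- Let g(s) = αs ln(s²) + μ|s|^{p-2}s with α > 0, μ < 0, and p > 2, and let G(s) = ∫₀ˢ g(t) dt = (α/2)(ln(s²) − 1)s² + (μ/p)|s|^p. Then there exists ξ₀ ≠ 0 with G(ξ₀) > 0 if and only if μ > −(αp/(p−2))·e^{−p/2}. -/
/-!
Writing `t = |s|`, `G s = t² (α log t - c t^q - α/2)` with `c = -μ/p`, `q = p - 2`. The function
`α log t - c t^q` is maximised at `t^q = α/(c q)`, with maximum `(α/q)(log (α/(c q)) - 1)`; the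
upper bound is `log x ≤ x - 1` at `x = t^q (c q)/α`. So `G` is positive somewhere iff this
maximum exceeds `α/2`, i.e. iff `exp (p/2) < α p / (-μ (p - 2))`.
-/

open Real

theorem log_sub_mul_rpow_le {a c q t : ℝ} (ha : 0 < a) (hc : 0 < c) (hq : 0 < q) (ht : 0 < t) :
    a * log t - c * t ^ q ≤ a / q * (log (a / (c * q)) - 1) := by
  have hA : 0 < a / (c * q) := by positivity
  have htq : 0 < t ^ q := rpow_pos_of_pos ht q
  have hlog := log_le_sub_one_of_pos (div_pos htq hA)
  rw [log_div htq.ne' hA.ne', log_rpow ht] at hlog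
  have key : a / q * (t ^ q / (a / (c * q))) = c * t ^ q := by field_simp
  have hscaled := mul_le_mul_of_nonneg_left hlog (div_pos ha hq).le
  calc a * log t - c * t ^ q = a / q * (q * log t) - c * t ^ q := by field_simp
    _ ≤ a / q * (log (a / (c * q)) - 1) := by nlinarith

theorem log_sub_mul_rpow_at_max {a c q : ℝ} (ha : 0 < a) (hc : 0 < c) (hq : 0 < q) :
    a * log ((a / (c * q)) ^ q⁻¹) - c * ((a / (c * q)) ^ q⁻¹) ^ q
      = a / q * (log (a / (c * q)) - 1) := by
  have hA : 0 < a / (c * q) := by positivity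
  rw [← rpow_mul hA.le, inv_mul_cancel₀ hq.ne', rpow_one, log_rpow hA]
  field_simp

theorem exists_lt_log_sub_mul_rpow_iff {a b c q : ℝ} (ha : 0 < a) (hc : 0 < c) (hq : 0 < q) :
    (∃ t, 0 < t ∧ b < a * log t - c * t ^ q) ↔ b < a / q * (log (a / (c * q)) - 1) := by
  constructor
  · rintro ⟨t, ht, hb⟩
    exact hb.trans_le (log_sub_mul_rpow_le ha hc hq ht)
  · intro hb
    refine ⟨(a / (c * q)) ^ q⁻¹, by positivity, ?_⟩
    rwa [log_sub_mul_rpow_at_max ha hc hq]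

theorem log_potential_eq_abs_sq_mul {α μ p s : ℝ} (hs : s ≠ 0) :
    α / 2 * (log (s ^ 2) - 1) * s ^ 2 + μ / p * |s| ^ p
      = |s| ^ 2 * (α * log |s| - (-μ / p) * |s| ^ (p - 2) - α / 2) := by
  have ht : 0 < |s| := abs_pos.mpr hs
  have hsplit : |s| ^ p = |s| ^ 2 * |s| ^ (p - 2) := by
    rw [← rpow_natCast, ← rpow_add ht]
    norm_num
  rw [← sq_abs s, log_pow, hsplit]
  push_cast
  ring

theorem half_lt_log_potential_max_iff {α μ p : ℝ} (hα : 0 < α) (hμ : μ < 0) (hp : 2 < p) :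
    α / 2 < α / (p - 2) * (log (α / (-μ / p * (p - 2))) - 1)
      ↔ μ > -(α * p / (p - 2)) * exp (-p / 2) := by
  have hq : 0 < p - 2 := by linarith
  have hA' : 0 < -μ / p * (p - 2) := mul_pos (div_pos (by linarith) (by linarith)) hq
  have hA : 0 < α / (-μ / p * (p - 2)) := div_pos hα hA'
  calc α / 2 < α / (p - 2) * (log (α / (-μ / p * (p - 2))) - 1)
      ↔ p / 2 < log (α / (-μ / p * (p - 2))) := by
        rw [div_mul_eq_mul_div, lt_div_iff₀ hq]
        constructor <;> intro h <;> nlinarith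
    _ ↔ exp (p / 2) < α / (-μ / p * (p - 2)) := lt_log_iff_exp_lt hA
    _ ↔ μ > -(α * p / (p - 2)) * exp (-p / 2) := by
        have hE : exp (-p / 2) = (exp (p / 2))⁻¹ := by rw [neg_div, exp_neg]
        have hEpos := exp_pos (p / 2)
        have hp0 : 0 < p := by linarith
        rw [hE, lt_div_iff₀ hA', gt_iff_lt, neg_mul, neg_lt, ← div_eq_mul_inv,
          lt_div_iff₀ hEpos, lt_div_iff₀ hq, ← mul_div_right_comm, ← mul_div_assoc, div_lt_iff₀ hp0]
        constructor <;> intro h <;> linarith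

/-- For `g(s) = α s ln s² + μ |s|^{p-2} s` with `α > 0`, `μ < 0`, `p > 2`,
and `G(s) = (α/2)(ln s² − 1) s² + (μ/p)|s|^p`, there exists `ξ₀ ≠ 0` with `G(ξ₀) > 0`
if and only if `μ > −(αp/(p−2)) e^{−p/2}`. -/
theorem stmt0 (α μ p : ℝ) (hα : 0 < α) (hμ : μ < 0) (hp : 2 < p)
    (G : ℝ → ℝ)
    (hG : ∀ s : ℝ, G s = α / 2 * (Real.log (s ^ 2) - 1) * s ^ 2 + μ / p * |s| ^ p) :
    (∃ ξ : ℝ, ξ ≠ 0 ∧ 0 < G ξ) ↔ μ > -(α * p / (p - 2)) * Real.exp (-p / 2) := by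
  have hc : 0 < -μ / p := div_pos (by linarith) (by linarith)
  have hq : 0 < p - 2 := by linarith
  rw [← half_lt_log_potential_max_iff hα hμ hp, ← exists_lt_log_sub_mul_rpow_iff hα hc hq]
  constructor
  · rintro ⟨ξ, hξ, hGξ⟩
    refine ⟨|ξ|, abs_pos.mpr hξ, ?_⟩
    rw [hG, log_potential_eq_abs_sq_mul hξ] at hGξ
    linarith [pos_of_mul_pos_right hGξ (sq_nonneg _)]
  · rintro ⟨t, ht, hb⟩
    refine ⟨t, ht.ne', ?_⟩
    rw [hG, log_potential_eq_abs_sq_mul ht.ne', abs_of_pos ht]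
    exact mul_pos (by positivity) (by linarith)
end

section
/- Let N ≥ 2, p ∈ (2, 2N/(N−2)) (any p > 2 if N = 2), and let A be an N-function with lim_{s→0}A(s)/s² = ∞. Suppose u_n ∈ H¹(ℝ^N) is bounded, sup_n ∫_{ℝ^N} A(u_n) dx < ∞, and u_n → 0 in L^p(ℝ^N). Then u_n → 0 in L²(ℝ^N). -/
open Real MeasureTheory Filter Topology

/-!
Near `0` the growth condition on `A` gives `s² ≤ ε A(s)`, while for `|s| ≥ δ` and `p ≥ 2` one has
`s² ≤ δ^(2-p) |s|^p`. Integrating, `‖u_n‖₂² ≤ ε ∫ A(u_n) + δ^(2-p) ‖u_n‖_p^p`, so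
`limsup ‖u_n‖₂² ≤ ε · sup_n ∫ A(u_n)` for every `ε > 0`.
-/

lemma sq_le_rpow_mul_abs_rpow {δ p s : ℝ} (hδ : 0 < δ) (hp : 2 ≤ p) (hs : δ ≤ |s|) :
    s ^ 2 ≤ δ ^ (2 - p) * |s| ^ p := by
  have hs0 : 0 < |s| := hδ.trans_le hs
  have hgap : δ ^ (p - 2) ≤ |s| ^ (p - 2) := rpow_le_rpow hδ.le hs (by linarith)
  calc s ^ 2 = δ ^ (2 - p) * δ ^ (p - 2) * |s| ^ (2 : ℝ) := by
        rw [← rpow_add hδ, rpow_two, sq_abs]; norm_num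
    _ ≤ δ ^ (2 - p) * |s| ^ (p - 2) * |s| ^ (2 : ℝ) := by gcongr
    _ = δ ^ (2 - p) * |s| ^ p := by rw [mul_assoc, ← rpow_add hs0]; ring_nf

lemma eventually_sq_le_mul_of_tendsto_div_sq {A : ℝ → ℝ} (hnn : ∀ s, 0 ≤ A s)
    (h2 : Tendsto (fun s => A s / s ^ 2) (𝓝[≠] 0) atTop) {ε : ℝ} (hε : 0 < ε) :
    ∀ᶠ s in 𝓝 0, s ^ 2 ≤ ε * A s := by
  have hpunct : ∀ᶠ s in 𝓝[≠] 0, ε⁻¹ ≤ A s / s ^ 2 := h2.eventually (eventually_ge_atTop _)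
  filter_upwards [eventually_nhdsWithin_iff.1 hpunct] with s hs
  rcases eq_or_ne s 0 with rfl | hs0
  · simpa using mul_nonneg hε.le (hnn 0)
  · have hs2 : 0 < s ^ 2 := by positivity
    have := hs hs0
    rw [le_div_iff₀ hs2, inv_mul_le_iff₀ hε] at this
    linarith

lemma exists_sq_le_mul_add_mul_abs_rpow {A : ℝ → ℝ} (hnn : ∀ s, 0 ≤ A s)
    (h2 : Tendsto (fun s => A s / s ^ 2) (𝓝[≠] 0) atTop) {p : ℝ} (hp : 2 ≤ p)
    {ε : ℝ} (hε : 0 < ε) : ∃ c, ∀ s, s ^ 2 ≤ ε * A s + c * |s| ^ p := by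
  obtain ⟨δ, hδ, hsmall⟩ :=
    Metric.eventually_nhds_iff.1 (eventually_sq_le_mul_of_tendsto_div_sq hnn h2 hε)
  refine ⟨δ ^ (2 - p), fun s => ?_⟩
  have hA : 0 ≤ ε * A s := mul_nonneg hε.le (hnn s)
  have hpow : 0 ≤ δ ^ (2 - p) * |s| ^ p := by positivity
  rcases lt_or_ge |s| δ with hs | hs
  · have := hsmall (show dist s 0 < δ by simpa using hs)
    linarith
  · have := sq_le_rpow_mul_abs_rpow hδ hp hs
    linarith

lemma tendsto_zero_of_le_mul_add_mul {ι : Type*} {l : Filter ι} {F G H : ι → ℝ}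
    (hF : ∀ i, 0 ≤ F i) {M : ℝ} (hG : ∀ i, G i ≤ M) (hH : Tendsto H l (𝓝 0))
    (hle : ∀ ε > 0, ∃ c, ∀ i, F i ≤ ε * G i + c * H i) : Tendsto F l (𝓝 0) := by
  refine tendsto_order.2 ⟨fun a ha => .of_forall fun i => ha.trans_le (hF i), fun a ha => ?_⟩
  set ε := a / (2 * (|M| + 1))
  have hε : 0 < ε := by positivity
  have hεM : ε * M < a / 2 := by
    have : ε * (|M| + 1) = a / 2 := by simp only [ε]; field_simp
    nlinarith [le_abs_self M]
  obtain ⟨c, hc⟩ := hle ε hε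
  have hcH : ∀ᶠ i in l, c * H i < a / 2 :=
    (by simpa using hH.const_mul c : Tendsto (fun i => c * H i) l (𝓝 0)).eventually_lt_const
      (by linarith)
  filter_upwards [hcH] with i hi
  nlinarith [hc i, hG i]

lemma integral_sq_le_mul_add_mul {α : Type*} [MeasurableSpace α] {μ : Measure α}
    {A : ℝ → ℝ} {p ε c : ℝ} (hpt : ∀ s, s ^ 2 ≤ ε * A s + c * |s| ^ p) {f : α → ℝ}
    (hsq : Integrable (fun x => f x ^ 2) μ) (hA : Integrable (fun x => A (f x)) μ)
    (hpow : Integrable (fun x => |f x| ^ p) μ) :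
    ∫ x, f x ^ 2 ∂μ ≤ ε * ∫ x, A (f x) ∂μ + c * ∫ x, |f x| ^ p ∂μ := by
  rw [← integral_const_mul, ← integral_const_mul,
    ← integral_add (hA.const_mul ε) (hpow.const_mul c)]
  exact integral_mono hsq ((hA.const_mul ε).add (hpow.const_mul c)) fun x => hpt (f x)

theorem stmt14_general (N : ℕ) (p : ℝ) (hp : 2 < p)
    (A : ℝ → ℝ) (hnn : ∀ s : ℝ, 0 ≤ A s)
    (h2 : Tendsto (fun s => A s / s ^ 2) (𝓝[≠] (0 : ℝ)) atTop)
    (u : ℕ → EuclideanSpace ℝ (Fin N) → ℝ)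
    (hAint : ∀ n, Integrable (fun x => A (u n x)))
    (hAbdd : ∃ M : ℝ, ∀ n, (∫ x, A (u n x)) ≤ M)
    (h2int : ∀ n, Integrable (fun x => (u n x) ^ 2))
    (hpint : ∀ n, Integrable (fun x => |u n x| ^ p))
    (hLp : Tendsto (fun n => ∫ x, |u n x| ^ p) atTop (𝓝 0)) :
    Tendsto (fun n => ∫ x, (u n x) ^ 2) atTop (𝓝 0) := by
  obtain ⟨M, hM⟩ := hAbdd
  refine tendsto_zero_of_le_mul_add_mul (fun n => integral_nonneg fun x => sq_nonneg _) hM hLp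
    fun ε hε => ?_
  obtain ⟨c, hc⟩ := exists_sq_le_mul_add_mul_abs_rpow hnn h2 hp.le hε
  exact ⟨c, fun n => integral_sq_le_mul_add_mul hc (h2int n) (hAint n) (hpint n)⟩

/-- a variant of Lions' lemma: if `u_n` is bounded in `H¹(ℝ^N)`,
`sup_n ∫ A(u_n) < ∞` for an N-function `A` with `A(s)/s² → ∞` as `s → 0`, and
`u_n → 0` in `L^p` with `2 < p < 2N/(N−2)` (any `p > 2` if `N = 2`), then `u_n → 0`
in `L²(ℝ^N)`. -/
theorem stmt14 (N : ℕ) (hN : 2 ≤ N) (p : ℝ) (hp : 2 < p)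
    (hp2 : N = 2 ∨ p < 2 * N / ((N : ℝ) - 2))
    (A : ℝ → ℝ) (heven : ∀ s : ℝ, A (-s) = A s)
    (hconv : ConvexOn ℝ Set.univ A) (hA0 : A 0 = 0) (hnn : ∀ s : ℝ, 0 ≤ A s)
    (h2 : Tendsto (fun s => A s / s ^ 2) (𝓝[≠] (0 : ℝ)) atTop)
    (u : ℕ → EuclideanSpace ℝ (Fin N) → ℝ)
    (hmeas : ∀ n, AEStronglyMeasurable (u n) volume)
    (hbdd : ∃ M : ℝ, ∀ n, (∫ x, ‖gradient (u n) x‖ ^ 2) + (∫ x, (u n x) ^ 2) ≤ M)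
    (hAint : ∀ n, Integrable (fun x => A (u n x)))
    (hAbdd : ∃ M : ℝ, ∀ n, (∫ x, A (u n x)) ≤ M)
    (h2int : ∀ n, Integrable (fun x => (u n x) ^ 2))
    (hpint : ∀ n, Integrable (fun x => |u n x| ^ p))
    (hLp : Tendsto (fun n => ∫ x, |u n x| ^ p) atTop (𝓝 0)) :
    Tendsto (fun n => ∫ x, (u n x) ^ 2) atTop (𝓝 0) :=
  stmt14_general N p hp A hnn h2 u hAint hAbdd h2int hpint hLp
end
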